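/- arXiv:1805.01221 — 2 statements merged into one kernel-verified Lean document; each statement's English description precedes it below -/
import Mathlib

section
/- Let c(x, P) be a diversity-favouring measure on {0,1}ⁿ \ {0ⁿ, 1ⁿ} for OneMinMax or LOTZ, and assume the population P is a subset of the Pareto set that does not cover the whole Pareto front. Sort P by non-increasing values of c(·, P) and consider a parent-selection mechanism that selects the i-th element of the sorted sequence with probability r_i. Then among the top three ranked elements of P there is at least one good individual, and hence the probability of selecting a good individual is at least min{r₁, r₂, r₃}. -/
noncomputable section
open scoped ENNReal
attribute [local instance] Classical.propDecidable

namespace EMO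


/-- A bit string of length `n`. -/
abbrev BitString (n : ℕ) := Fin n → Bool

/-- Number of one-bits. -/
def onesCount {n : ℕ} (x : BitString n) : ℕ :=
  (Finset.univ.filter fun i => x i = true).card

def allOnes (n : ℕ) : BitString n := fun _ => true
def allZeros (n : ℕ) : BitString n := fun _ => false

/-- The bi-objective function OneMinMax. -/
def OneMinMax {n : ℕ} (x : BitString n) : ℤ × ℤ :=
  ((onesCount x : ℤ), (n : ℤ) - (onesCount x : ℤ))

/-- Number of leading ones. -/
def leadingOnes {n : ℕ} (x : BitString n) : ℕ :=
  (Finset.univ.filter fun i : Fin n => ∀ j : Fin n, j ≤ i → x j = true).card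

/-- Number of trailing zeros. -/
def trailingZeros {n : ℕ} (x : BitString n) : ℕ :=
  (Finset.univ.filter fun i : Fin n => ∀ j : Fin n, i ≤ j → x j = false).card

/-- The bi-objective function LOTZ. -/
def LOTZ {n : ℕ} (x : BitString n) : ℤ × ℤ :=
  ((leadingOnes x : ℤ), (trailingZeros x : ℤ))

/-- `y` dominates `x` (maximisation). -/
def dominates {n : ℕ} (f : BitString n → ℤ × ℤ) (y x : BitString n) : Prop :=
  (f x).1 ≤ (f y).1 ∧ (f x).2 ≤ (f y).2 ∧ f x ≠ f y

/-- `y` weakly dominates `x` (maximisation). -/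
def weaklyDominates {n : ℕ} (f : BitString n → ℤ × ℤ) (y x : BitString n) : Prop :=
  (f x).1 ≤ (f y).1 ∧ (f x).2 ≤ (f y).2

/-- Pareto optimality. -/
def paretoOptimal {n : ℕ} (f : BitString n → ℤ × ℤ) (x : BitString n) : Prop :=
  ¬ ∃ y : BitString n, dominates f y x

/-- A population of mutually non-dominated points. -/
def mutuallyNonDominated {n : ℕ} (f : BitString n → ℤ × ℤ)
    (P : Finset (BitString n)) : Prop :=
  ∀ x ∈ P, ∀ y ∈ P, ¬ dominates f y x

/-- Flip bit `i` of `x`. -/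
def flipBit {n : ℕ} (x : BitString n) (i : Fin n) : BitString n :=
  Function.update x i (!x i)

/-- `y` is a Hamming neighbour of `x`. -/
def hammingNeighbour {n : ℕ} (x y : BitString n) : Prop :=
  ∃ i : Fin n, y = flipBit x i

/-- `x` is good relative to population `P`: it is Pareto optimal and has a Pareto-optimal
Hamming neighbour whose objective vector is not attained by any member of `P`. -/
def isGood {n : ℕ} (f : BitString n → ℤ × ℤ) (P : Finset (BitString n))
    (x : BitString n) : Prop :=
  paretoOptimal f x ∧
    ∃ y : BitString n, hammingNeighbour x y ∧ paretoOptimal f y ∧ ∀ z ∈ P, f z ≠ f y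

/-- `x` is bad relative to population `P`. -/
def isBad {n : ℕ} (f : BitString n → ℤ × ℤ) (P : Finset (BitString n))
    (x : BitString n) : Prop :=
  paretoOptimal f x ∧
    ¬ ∃ y : BitString n, hammingNeighbour x y ∧ paretoOptimal f y ∧ ∀ z ∈ P, f z ≠ f y

/-- `P` covers the whole Pareto front of `f`. -/
def coversFront {n : ℕ} (f : BitString n → ℤ × ℤ) (P : Finset (BitString n)) : Prop :=
  ∀ x : BitString n, paretoOptimal f x → ∃ z ∈ P, f z = f x

/-- The hypervolume contribution of `x` to `P` (for a population of mutually
non-dominated points, with reference point `r`). -/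
def HVC {n : ℕ} (f : BitString n → ℤ × ℤ) (r : ℤ × ℤ) (x : BitString n)
    (P : Finset (BitString n)) : ℤ :=
  ((f x).1 - (WithBot.unbotD r.1 ((P.filter fun z => (f z).1 < (f x).1).image fun z => (f z).1).max)) *
  ((f x).2 - (WithBot.unbotD r.2 ((P.filter fun z => (f z).2 < (f x).2).image fun z => (f z).2).max))

/-- Crowding distance of `x` in `P` with respect to a single objective `g`: infinite for the
boundary points, and otherwise the normalised difference between successor and predecessor. -/
def CDCobj {n : ℕ} (g : BitString n → ℤ) (x : BitString n)
    (P : Finset (BitString n)) : ℝ≥0∞ :=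
  if (∀ z ∈ P, g x ≤ g z) ∨ (∀ z ∈ P, g z ≤ g x) then ⊤
  else
    (((WithTop.untopD 0 ((P.filter fun z => g x < g z).image g).min -
        (WithBot.unbotD 0 ((P.filter fun z => g z < g x).image g).max)).toNat : ℝ≥0∞)) /
      (((WithBot.unbotD 0 (P.image g).max - (WithTop.untopD 0 (P.image g).min)).toNat : ℝ≥0∞))

/-- The crowding distance contribution of `x` to `P`. -/
def CDC {n : ℕ} (f : BitString n → ℤ × ℤ) (x : BitString n)
    (P : Finset (BitString n)) : ℝ≥0∞ :=
  CDCobj (fun z => (f z).1) x P + CDCobj (fun z => (f z).2) x P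

/-- A diversity measure `c` is diversity-favouring on `S`. -/
def diversityFavouring {n : ℕ} {α : Type*} [Preorder α] (f : BitString n → ℤ × ℤ)
    (c : BitString n → Finset (BitString n) → α) (S : Set (BitString n)) : Prop :=
  ∀ P : Finset (BitString n), mutuallyNonDominated f P →
    ∀ x ∈ P, ∀ y ∈ P, x ∈ S → y ∈ S → isBad f P x → isGood f P y → c x P < c y P

/-- The default bit string (used only to make selection kernels total). -/
def defaultBS (n : ℕ) : BitString n := fun _ => false

/-- Local mutation: flip a single uniformly random bit. -/
def localMutation {n : ℕ} (hn : 0 < n) (x : BitString n) : PMF (BitString n) :=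
  haveI : Nonempty (Fin n) := ⟨⟨0, hn⟩⟩
  (PMF.uniformOfFintype (Fin n)).map (flipBit x)

/-- A Bernoulli coin with success probability `1/n` (for `n ≥ 1`). -/
def bitFlipCoin (n : ℕ) : PMF Bool :=
  PMF.ofFintype (fun b => cond b (min ((n : ℝ≥0∞))⁻¹ 1) (1 - min ((n : ℝ≥0∞))⁻¹ 1))
    (by rw [Fintype.sum_bool]; exact add_tsub_cancel_of_le (min_le_right _ _))

/-- Global (standard bit) mutation: flip each bit independently with probability `1/n`. -/
def globalMutationAux {n : ℕ} : List (Fin n) → BitString n → PMF (BitString n)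
  | [], x => PMF.pure x
  | i :: is, x => (bitFlipCoin n).bind fun b =>
      globalMutationAux is (if b then flipBit x i else x)

def globalMutation {n : ℕ} (x : BitString n) : PMF (BitString n) :=
  globalMutationAux (List.finRange n) x

/-- Survival selection: if `s'` is not dominated by any member of `P`, add `s'` to `P` and
remove all members weakly dominated by `s'`. -/
def updatePop {n : ℕ} (f : BitString n → ℤ × ℤ) (P : Finset (BitString n))
    (s' : BitString n) : Finset (BitString n) :=
  if ∃ z ∈ P, dominates f z s' then P
  else insert s' (P.filter fun z => ¬ weaklyDominates f s' z)

/-- One iteration of (G)SEMO with parent-selection kernel `select` and mutation `mutate`. -/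
def step {n : ℕ} (f : BitString n → ℤ × ℤ)
    (select : Finset (BitString n) → PMF (BitString n))
    (mutate : BitString n → PMF (BitString n))
    (P : Finset (BitString n)) : PMF (Finset (BitString n)) :=
  (select P).bind fun s => (mutate s).map fun s' => updatePop f P s'

/-- The L-dominant attribute `L(x) = LO(x) + TZ(x)`. -/
def Ldom {n : ℕ} (x : BitString n) : ℕ := leadingOnes x + trailingZeros x

/-- The subpopulation of points with maximum L-dominant attribute. -/
def maxLSub {n : ℕ} (P : Finset (BitString n)) : Finset (BitString n) :=
  P.filter fun x => ∀ z ∈ P, Ldom z ≤ Ldom x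

/-- One iteration of the modified GSEMO: parent selection (and the diversity contribution)
is restricted to the subpopulation of points with maximum L-dominant attribute. -/
def stepMod {n : ℕ} (f : BitString n → ℤ × ℤ)
    (select : Finset (BitString n) → PMF (BitString n))
    (mutate : BitString n → PMF (BitString n))
    (P : Finset (BitString n)) : PMF (Finset (BitString n)) :=
  (select (maxLSub P)).bind fun s => (mutate s).map fun s' => updatePop f P s'

/-- Initial population: a single uniformly random bit string. -/
def initDist (n : ℕ) : PMF (Finset (BitString n)) :=
  (PMF.uniformOfFintype (BitString n)).map fun x => {x}

/-- Distribution of the population after `t` iterations. -/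
def stateDist {S : Type*} (init : PMF S) (st : S → PMF S) : ℕ → PMF S
  | 0 => init
  | t + 1 => (stateDist init st t).bind st

/-- Expected number of iterations until an (absorbing) goal predicate is reached,
expressed as `∑ₜ Pr[goal not yet reached at time t]`. -/
def expectedRuntime {S : Type*} (init : PMF S) (st : S → PMF S) (goal : S → Prop) : ℝ≥0∞ :=
  ∑' t : ℕ, (stateDist init st t).toOuterMeasure {s | ¬ goal s}

/-- Uniform parent selection. -/
def uniformSelect {n : ℕ} (P : Finset (BitString n)) : PMF (BitString n) :=
  if h : P.Nonempty then PMF.uniformOfFinset P h else PMF.pure (defaultBS n)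

/-- Highest Diversity Contribution (HDC) parent selection: select an individual with
maximum diversity contribution, ties broken uniformly at random. -/
def HDCSelect {n : ℕ} {α : Type*} [LinearOrder α]
    (c : BitString n → Finset (BitString n) → α)
    (P : Finset (BitString n)) : PMF (BitString n) :=
  if h : P.Nonempty then
    PMF.uniformOfFinset (P.filter fun x => ∀ y ∈ P, c y P ≤ c x P)
      (by
        obtain ⟨b, hb, hmax⟩ := P.exists_max_image (fun x => c x P) h
        exact ⟨b, Finset.mem_filter.mpr ⟨hb, hmax⟩⟩)
  else PMF.pure (defaultBS n)

/-- Non-Minimum Uniform at Random (NMUAR) parent selection: select uniformly at random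
among all individuals whose diversity contribution is not minimal (from the whole
population if all contributions are equal). -/
def NMUARSelect {n : ℕ} {α : Type*} [LinearOrder α]
    (c : BitString n → Finset (BitString n) → α)
    (P : Finset (BitString n)) : PMF (BitString n) :=
  if h : P.Nonempty then
    if hQ : (P.filter fun x => ∃ y ∈ P, c y P < c x P).Nonempty then
      PMF.uniformOfFinset _ hQ
    else PMF.uniformOfFinset P h
  else PMF.pure (defaultBS n)

/-- Tournament selection with tournament size `μ = |P|`: draw `μ` individuals uniformly at
random with replacement from `P` and select one with the highest diversity contribution
among the drawn multiset (ties broken uniformly at random). -/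
def tournamentSelect {n : ℕ} {α : Type*} [LinearOrder α]
    (c : BitString n → Finset (BitString n) → α)
    (P : Finset (BitString n)) : PMF (BitString n) :=
  if h : P.Nonempty then
    haveI : Nonempty {x // x ∈ P} := h.to_subtype
    (PMF.uniformOfFintype (Fin P.card → {x // x ∈ P})).bind fun g =>
      PMF.uniformOfFinset
        ((Finset.univ.image fun i => ((g i : {x // x ∈ P}) : BitString n)).filter fun x =>
          ∀ y ∈ Finset.univ.image fun i => ((g i : {x // x ∈ P}) : BitString n), c y P ≤ c x P)
        (by
          have hne : (Finset.univ.image fun i => ((g i : {x // x ∈ P}) : BitString n)).Nonempty := by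
            refine ⟨(g ⟨0, Finset.card_pos.mpr h⟩ : {x // x ∈ P}), ?_⟩
            exact Finset.mem_image.mpr ⟨⟨0, Finset.card_pos.mpr h⟩, Finset.mem_univ _, rfl⟩
          obtain ⟨b, hb, hmax⟩ :=
            Finset.exists_max_image _ (fun x => c x P) hne
          exact ⟨b, Finset.mem_filter.mpr ⟨hb, hmax⟩⟩)
  else PMF.pure (defaultBS n)

/-- Exponential ranking scheme: probability of selecting the `i`-th ranked individual
(1-indexed) in a population of size `μ`. -/
def rExp (i μ : ℕ) : ℝ≥0∞ :=
  (2 : ℝ≥0∞)⁻¹ ^ i / ∑ j ∈ Finset.Icc 1 μ, (2 : ℝ≥0∞)⁻¹ ^ j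

/-- Power-law ranking scheme. -/
def rPow (i μ : ℕ) : ℝ≥0∞ :=
  ((i : ℝ≥0∞) ^ 2)⁻¹ / ∑ j ∈ Finset.Icc 1 μ, ((j : ℝ≥0∞) ^ 2)⁻¹

/-- Harmonic ranking scheme. -/
def rHarm (i μ : ℕ) : ℝ≥0∞ :=
  (i : ℝ≥0∞)⁻¹ / ∑ j ∈ Finset.Icc 1 μ, (j : ℝ≥0∞)⁻¹


/-- `select` implements a rank-based parent-selection scheme with rank probabilities
`r i μ` (1-indexed rank `i`, population size `μ`) with respect to the diversity
contribution `c`, for some non-increasing ordering of the population by `c`. -/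
def implementsRankScheme {n : ℕ} {α : Type*} [Preorder α]
    (c : BitString n → Finset (BitString n) → α) (r : ℕ → ℕ → ℝ≥0∞)
    (select : Finset (BitString n) → PMF (BitString n)) : Prop :=
  ∀ P : Finset (BitString n), P.Nonempty →
    ∃ l : List (BitString n), l.Nodup ∧ l.toFinset = P ∧
      l.Chain' (fun a b => c b P ≤ c a P) ∧
      (∀ i : Fin l.length, select P (l.get i) = r (i.val + 1) P.card) ∧
      (∀ x : BitString n, x ∉ P → select P x = 0)

/-- The Pareto-optimal point `1^i 0^(n-i)` of LOTZ. -/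
def opt (n i : ℕ) : BitString n := fun t => decide ((t : ℕ) < i)

/-- The whole Pareto set of LOTZ as a population. -/
def frontSet (n : ℕ) : Finset (BitString n) := (Finset.range (n + 1)).image (opt n)

/-- `P` has a gap at position `i`. -/
def hasGapAt {n : ℕ} (P : Finset (BitString n)) (i : ℕ) : Prop :=
  opt n i ∉ P ∧ (∃ j, j < i ∧ opt n j ∈ P) ∧ (∃ k, i < k ∧ k ≤ n ∧ opt n k ∈ P)

/-- `P` has a gap at some position `i` with `n/4 ≤ i ≤ 3n/4`. -/
def gapInRange (n : ℕ) (P : Finset (BitString n)) : Prop :=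
  ∃ i : ℕ, n ≤ 4 * i ∧ 4 * i ≤ 3 * n ∧ hasGapAt P i

/-- `P` contains both `0^n` and `1^n`. -/
def bothExtremes (n : ℕ) (P : Finset (BitString n)) : Prop :=
  allZeros n ∈ P ∧ allOnes n ∈ P

/-- The chain stopped (frozen) as soon as `cond` holds. -/
def stopWhen {S : Type*} (cond : S → Prop) (st : S → PMF S) (s : S) : PMF S :=
  if cond s then PMF.pure s else st s

/-!
On the Pareto front of OneMinMax and of LOTZ a point is described by a level in `0..n`
(its number of ones, resp. of leading ones): the objective vector is `(k, n - k)` at level `k`,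
the extremes `0ⁿ`, `1ⁿ` are the levels `0` and `n`, and a Hamming neighbour on the front sits at
each adjacent level. If `P` misses a level `k`, walking from any `x ∈ P` towards `k` through
occupied levels ends at a point whose next level is free; that point is good, and it is not
extreme when `x` is not. At most two of the three top-ranked points are extreme, so if none of
them were good, a bad non-extreme point would be ranked above a good non-extreme one,
contradicting diversity-favouring.
-/

theorem _root_.List.exists_mem_take_three_of_pairwise {β α : Type*} [LinearOrder α] {l : List β}
    (hl : l.Nodup) (hne : l ≠ []) {key : β → α} (hsort : l.Pairwise fun a b => key b ≤ key a)
    {p : β → Prop} {S : Set β} {a b : β} (hS : Sᶜ ⊆ {a, b})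
    (hgood : ∀ x ∈ l, ∃ y ∈ l, p y ∧ (x ∈ S → y ∈ S))
    (hkey : ∀ x ∈ l, ∀ y ∈ l, x ∈ S → y ∈ S → ¬ p x → p y → key x < key y) :
    ∃ x ∈ l.take 3, p x := by
  by_contra! htop
  have hsplit := l.take_append_drop 3
  have mem_drop : ∀ y ∈ l, p y → y ∈ l.drop 3 := fun y hy hpy => by
    rw [← hsplit, List.mem_append] at hy
    exact hy.resolve_left fun h => htop y h hpy
  obtain ⟨y₀, hy₀, hpy₀, -⟩ := hgood _ (List.head_mem hne)
  have hlen : (l.take 3).length = 3 := by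
    have := List.length_pos_of_mem (mem_drop y₀ hy₀ hpy₀)
    simp only [List.length_drop, List.length_take] at this ⊢
    omega
  obtain ⟨x, hx, hxS⟩ : ∃ x ∈ l.take 3, x ∈ S := by
    by_contra! hout
    have hsub : (l.take 3).toFinset ⊆ {a, b} := fun x hx =>
      by simpa using hS (hout x (List.mem_toFinset.mp hx))
    have := Finset.card_le_card hsub
    rw [List.toFinset_card_of_nodup (hl.sublist (l.take_sublist 3)), hlen] at this
    exact absurd (this.trans Finset.card_le_two) (by norm_num)
  have hxl := List.mem_of_mem_take hx
  obtain ⟨y, hyl, hpy, hyS⟩ := hgood x hxl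
  have hyx : key y ≤ key x := by
    rw [← hsplit, List.pairwise_append] at hsort
    exact hsort.2.2 x hx y (mem_drop y hyl hpy)
  exact hyx.not_gt (hkey x hxl y hyl hxS (hyS hxS) (htop x hx) hpy)

theorem _root_.Set.exists_mem_pred_notMem {L : Set ℕ} {k m : ℕ} (hk : k ∉ L) (hm : m ∈ L)
    (hkm : k < m) : ∃ a ∈ L, k < a ∧ a ≤ m ∧ a - 1 ∉ L := by
  induction m with
  | zero => omega
  | succ m ih =>
    by_cases hmL : m ∈ L
    · obtain ⟨a, haL, hka, ham, ha⟩ :=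
        ih hmL (lt_of_le_of_ne (Nat.le_of_lt_succ hkm) fun h => hk (h ▸ hmL))
      exact ⟨a, haL, hka, by omega, ha⟩
    · exact ⟨m + 1, hm, hkm, le_rfl, hmL⟩

theorem _root_.Set.exists_mem_succ_notMem {L : Set ℕ} {k m : ℕ} (hk : k ∉ L) (hm : m ∈ L)
    (hmk : m < k) : ∃ a ∈ L, m ≤ a ∧ a < k ∧ a + 1 ∉ L := by
  induction h : k - m generalizing m with
  | zero => omega
  | succ d ih =>
    by_cases hmL : m + 1 ∈ L
    · obtain ⟨a, haL, hma, hak, ha⟩ :=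
        ih hmL (lt_of_le_of_ne hmk fun h => hk (h ▸ hmL)) (by omega)
      exact ⟨a, haL, by omega, hak, ha⟩
    · exact ⟨m, hm, le_rfl, hmk, hmL⟩

section

variable {n : ℕ}

structure ParetoLevels (f : BitString n → ℤ × ℤ) (lev : BitString n → ℕ) : Prop where
  le : ∀ x, lev x ≤ n
  apply_eq : ∀ x, paretoOptimal f x → f x = ((lev x : ℤ), (n : ℤ) - lev x)
  eq_zero_iff : ∀ x, paretoOptimal f x → (lev x = 0 ↔ x = allZeros n)
  eq_n_iff : ∀ x, paretoOptimal f x → (lev x = n ↔ x = allOnes n)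
  exists_pred : ∀ x, paretoOptimal f x → 0 < lev x →
    ∃ y, hammingNeighbour x y ∧ paretoOptimal f y ∧ lev y + 1 = lev x
  exists_succ : ∀ x, paretoOptimal f x → lev x < n →
    ∃ y, hammingNeighbour x y ∧ paretoOptimal f y ∧ lev y = lev x + 1

namespace ParetoLevels

variable {f : BitString n → ℤ × ℤ} {lev : BitString n → ℕ} (h : ParetoLevels f lev)
  {P : Finset (BitString n)}
include h

theorem apply_eq_iff {x y : BitString n} (hx : paretoOptimal f x) (hy : paretoOptimal f y) :
    f x = f y ↔ lev x = lev y := by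
  rw [h.apply_eq x hx, h.apply_eq y hy]
  simp only [Prod.mk.injEq, Nat.cast_inj]
  exact and_iff_left_of_imp fun hxy => by rw [hxy]

theorem ne_extremes_iff {x : BitString n} (hx : paretoOptimal f x) :
    (x ≠ allZeros n ∧ x ≠ allOnes n) ↔ 0 < lev x ∧ lev x < n := by
  rw [ne_eq, ne_eq, ← h.eq_zero_iff x hx, ← h.eq_n_iff x hx, Nat.pos_iff_ne_zero,
    (h.le x).lt_iff_ne]

theorem exists_level_notMem (hPpar : ∀ x ∈ P, paretoOptimal f x) (hncov : ¬ coversFront f P) :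
    ∃ k ≤ n, k ∉ lev '' P := by
  simp only [coversFront, not_forall, not_exists, not_and] at hncov
  obtain ⟨w, hw, hwP⟩ := hncov
  refine ⟨lev w, h.le w, ?_⟩
  rintro ⟨z, hz, hzw⟩
  exact hwP z hz ((h.apply_eq_iff (hPpar z hz) hw).mpr hzw)

theorem isGood_of_pred_notMem (hPpar : ∀ x ∈ P, paretoOptimal f x) {x : BitString n}
    (hx : paretoOptimal f x) (hpos : 0 < lev x) (hmiss : lev x - 1 ∉ lev '' P) :
    isGood f P x := by
  obtain ⟨y, hxy, hy, hly⟩ := h.exists_pred x hx hpos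
  refine ⟨hx, y, hxy, hy, fun z hz hzy => hmiss ⟨z, hz, ?_⟩⟩
  rw [(h.apply_eq_iff (hPpar z hz) hy).mp hzy]
  omega

theorem isGood_of_succ_notMem (hPpar : ∀ x ∈ P, paretoOptimal f x) {x : BitString n}
    (hx : paretoOptimal f x) (hlt : lev x < n) (hmiss : lev x + 1 ∉ lev '' P) :
    isGood f P x := by
  obtain ⟨y, hxy, hy, hly⟩ := h.exists_succ x hx hlt
  refine ⟨hx, y, hxy, hy, fun z hz hzy => hmiss ⟨z, hz, ?_⟩⟩
  rw [(h.apply_eq_iff (hPpar z hz) hy).mp hzy, hly]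

theorem exists_isGood (hPpar : ∀ x ∈ P, paretoOptimal f x) (hncov : ¬ coversFront f P)
    {x : BitString n} (hx : x ∈ P) :
    ∃ y ∈ P, isGood f P y ∧
      (x ≠ allZeros n ∧ x ≠ allOnes n → y ≠ allZeros n ∧ y ≠ allOnes n) := by
  obtain ⟨k, hkn, hk⟩ := h.exists_level_notMem hPpar hncov
  have hxL : lev x ∈ lev '' P := ⟨x, hx, rfl⟩
  rcases lt_or_gt_of_ne (ne_of_mem_of_not_mem hxL hk) with hxk | hkx
  · obtain ⟨_, ⟨y, hy, rfl⟩, hxy, hyk, hmiss⟩ := Set.exists_mem_succ_notMem hk hxL hxk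
    refine ⟨y, hy, h.isGood_of_succ_notMem hPpar (hPpar y hy) (by omega) hmiss, fun hxS => ?_⟩
    rw [h.ne_extremes_iff (hPpar x hx)] at hxS
    rw [h.ne_extremes_iff (hPpar y hy)]
    omega
  · obtain ⟨_, ⟨y, hy, rfl⟩, hky, hyx, hmiss⟩ := Set.exists_mem_pred_notMem hk hxL hkx
    refine ⟨y, hy, h.isGood_of_pred_notMem hPpar (hPpar y hy) (by omega) hmiss, fun hxS => ?_⟩
    rw [h.ne_extremes_iff (hPpar x hx)] at hxS
    rw [h.ne_extremes_iff (hPpar y hy)]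
    omega

end ParetoLevels

theorem flipBit_flipBit (x : BitString n) (i : Fin n) : flipBit (flipBit x i) i = x := by
  simp [flipBit]

theorem onesCount_flipBit_add_one {x : BitString n} {i : Fin n} (hi : x i = true) :
    onesCount (flipBit x i) + 1 = onesCount x := by
  have hfilter : (Finset.univ.filter fun j => flipBit x i j = true)
      = (Finset.univ.filter fun j => x j = true).erase i := by
    ext j
    simp only [Finset.mem_filter, Finset.mem_erase, Finset.mem_univ, true_and, flipBit,
      Function.update_apply]
    split_ifs with hj <;> simp [hj, hi]
  rw [onesCount, hfilter, Finset.card_erase_add_one (by simpa using hi), onesCount]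

theorem onesCount_le (x : BitString n) : onesCount x ≤ n :=
  (Finset.card_filter_le _ _).trans_eq (Finset.card_fin n)

theorem onesCount_eq_zero_iff {x : BitString n} : onesCount x = 0 ↔ x = allZeros n := by
  simp [onesCount, funext_iff, allZeros]

theorem onesCount_eq_iff {x : BitString n} : onesCount x = n ↔ x = allOnes n := by
  have := Finset.card_filter_eq_iff (s := Finset.univ) (p := fun i : Fin n => x i = true)
  rw [Finset.card_fin] at this
  simp [onesCount, this, funext_iff, allOnes]

theorem paretoOptimal_oneMinMax (x : BitString n) : paretoOptimal OneMinMax x := by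
  rintro ⟨y, h₁, h₂, hne⟩
  simp only [OneMinMax] at h₁ h₂ hne
  exact hne (by rw [show onesCount x = onesCount y by omega])

theorem paretoLevels_oneMinMax : ParetoLevels (OneMinMax (n := n)) onesCount where
  le := onesCount_le
  apply_eq _ _ := rfl
  eq_zero_iff _ _ := onesCount_eq_zero_iff
  eq_n_iff _ _ := onesCount_eq_iff
  exists_pred x _ hpos := by
    obtain ⟨i, hi⟩ : ∃ i, x i = true := by
      by_contra! hx
      exact hpos.ne' (onesCount_eq_zero_iff.mpr (funext fun i => by simpa [allZeros] using hx i))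
    exact ⟨_, ⟨i, rfl⟩, paretoOptimal_oneMinMax _, onesCount_flipBit_add_one hi⟩
  exists_succ x _ hlt := by
    obtain ⟨i, hi⟩ : ∃ i, x i = false := by
      by_contra! hx
      exact hlt.ne (onesCount_eq_iff.mpr (funext fun i => by simpa [allOnes] using hx i))
    have hflip : flipBit x i i = true := by simp [flipBit, hi]
    refine ⟨_, ⟨i, rfl⟩, paretoOptimal_oneMinMax _, ?_⟩
    rw [← onesCount_flipBit_add_one hflip, flipBit_flipBit]

theorem _root_.Fin.mem_of_lt_card_of_isLowerSet {A : Finset (Fin n)}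
    (hA : IsLowerSet (A : Set (Fin n))) {i : Fin n} (hi : (i : ℕ) < A.card) : i ∈ A := by
  by_contra hiA
  have hsub : A ⊆ Finset.Iio i := fun j hj =>
    Finset.mem_Iio.mpr (lt_of_not_ge fun hij => hiA (hA hij hj))
  have := Finset.card_le_card hsub
  rw [Fin.card_Iio] at this
  omega

theorem _root_.Fin.mem_of_sub_card_le_of_isUpperSet {A : Finset (Fin n)}
    (hA : IsUpperSet (A : Set (Fin n))) {i : Fin n} (hi : n - A.card ≤ (i : ℕ)) : i ∈ A := by
  by_contra hiA
  have hsub : A ⊆ Finset.Ioi i := fun j hj =>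
    Finset.mem_Ioi.mpr (lt_of_not_ge fun hji => hiA (hA hji hj))
  have := Finset.card_le_card hsub
  rw [Fin.card_Ioi] at this
  omega

theorem apply_eq_true_of_lt_leadingOnes {x : BitString n} {i : Fin n}
    (hi : (i : ℕ) < leadingOnes x) : x i = true := by
  have hlower : IsLowerSet ((Finset.univ.filter fun i : Fin n => ∀ j ≤ i, x j = true :
      Finset (Fin n)) : Set (Fin n)) := fun a b hba ha => by
    simp only [Finset.coe_filter, Finset.mem_univ, true_and, Set.mem_ofPred_eq] at ha ⊢
    exact fun j hj => ha j (hj.trans hba)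
  simpa using (Finset.mem_filter.mp (Fin.mem_of_lt_card_of_isLowerSet hlower hi)).2 i le_rfl

theorem apply_eq_false_of_sub_trailingZeros_le {x : BitString n} {i : Fin n}
    (hi : n - trailingZeros x ≤ (i : ℕ)) : x i = false := by
  have hupper : IsUpperSet ((Finset.univ.filter fun i : Fin n => ∀ j, i ≤ j → x j = false :
      Finset (Fin n)) : Set (Fin n)) := fun a b hab ha => by
    simp only [Finset.coe_filter, Finset.mem_univ, true_and, Set.mem_ofPred_eq] at ha ⊢
    exact fun j hj => ha j (hab.trans hj)
  simpa using (Finset.mem_filter.mp (Fin.mem_of_sub_card_le_of_isUpperSet hupper hi)).2 i le_rfl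

theorem leadingOnes_add_trailingZeros_le (x : BitString n) :
    leadingOnes x + trailingZeros x ≤ n := by
  have hdisj : Disjoint (Finset.univ.filter fun i : Fin n => ∀ j ≤ i, x j = true)
      (Finset.univ.filter fun i : Fin n => ∀ j, i ≤ j → x j = false) := by
    rw [Finset.disjoint_filter]
    intro i _ hlead htrail
    simpa [hlead i le_rfl] using htrail i le_rfl
  have := Finset.card_le_univ ((Finset.univ.filter fun i : Fin n => ∀ j ≤ i, x j = true) ∪
    (Finset.univ.filter fun i : Fin n => ∀ j, i ≤ j → x j = false))
  rwa [Finset.card_union_of_disjoint hdisj, Fintype.card_fin] at this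

theorem eq_opt_of_leadingOnes_add_trailingZeros {x : BitString n}
    (hx : leadingOnes x + trailingZeros x = n) : x = opt n (leadingOnes x) := by
  funext i
  by_cases hi : (i : ℕ) < leadingOnes x
  · simp [opt, hi, apply_eq_true_of_lt_leadingOnes hi]
  · simp [opt, hi, apply_eq_false_of_sub_trailingZeros_le (show n - trailingZeros x ≤ i by omega)]

theorem leadingOnes_opt {k : ℕ} (hk : k ≤ n) : leadingOnes (opt n k) = k := by
  have hfilter : (Finset.univ.filter fun i : Fin n => ∀ j ≤ i, opt n k j = true)
      = Finset.univ.filter fun i : Fin n => (i : ℕ) < k := by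
    ext i
    simp only [Finset.mem_filter, Finset.mem_univ, true_and, opt, decide_eq_true_eq]
    exact ⟨fun h => h i le_rfl, fun h j hj => lt_of_le_of_lt (Fin.le_def.mp hj) h⟩
  rw [leadingOnes, hfilter, Fin.card_filter_val_lt, min_eq_right hk]

theorem trailingZeros_opt {k : ℕ} (hk : k ≤ n) : trailingZeros (opt n k) = n - k := by
  have hfilter : (Finset.univ.filter fun i : Fin n => ∀ j, i ≤ j → opt n k j = false)
      = Finset.univ.filter fun i : Fin n => ¬ (i : ℕ) < k := by
    ext i
    simp only [Finset.mem_filter, Finset.mem_univ, true_and, opt, decide_eq_false_iff_not]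
    exact ⟨fun h => h i le_rfl, fun h j hj => fun hj' => h (lt_of_le_of_lt (Fin.le_def.mp hj) hj')⟩
  have hsplit := Finset.card_filter_add_card_filter_not
    (s := (Finset.univ : Finset (Fin n))) (fun i : Fin n => (i : ℕ) < k)
  rw [Fin.card_filter_val_lt, min_eq_right hk, Finset.card_univ, Fintype.card_fin] at hsplit
  rw [trailingZeros, hfilter]
  omega

theorem LOTZ_opt {k : ℕ} (hk : k ≤ n) : LOTZ (opt n k) = ((k : ℤ), (n : ℤ) - k) := by
  rw [LOTZ, leadingOnes_opt hk, trailingZeros_opt hk, Nat.cast_sub hk]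

theorem paretoOptimal_opt {k : ℕ} (hk : k ≤ n) : paretoOptimal LOTZ (opt n k) := by
  rintro ⟨y, h₁, h₂, hne⟩
  have hy := leadingOnes_add_trailingZeros_le y
  simp only [LOTZ, leadingOnes_opt hk, trailingZeros_opt hk] at h₁ h₂ hne
  exact hne (by rw [show leadingOnes y = k by omega, show trailingZeros y = n - k by omega])

theorem opt_zero : opt n 0 = allZeros n := by
  funext i; simp [opt, allZeros]

theorem opt_self : opt n n = allOnes n := by
  funext i; simp [opt, allOnes]

theorem flipBit_opt {k : ℕ} (hk : k < n) : flipBit (opt n k) ⟨k, hk⟩ = opt n (k + 1) := by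
  funext i
  simp only [flipBit, Function.update_apply, opt]
  split_ifs with hi
  · subst hi; simp
  · have : (i : ℕ) ≠ k := fun h => hi (Fin.ext h)
    simp only [decide_eq_decide]
    omega

theorem leadingOnes_le (x : BitString n) : leadingOnes x ≤ n :=
  (Nat.le_add_right _ _).trans (leadingOnes_add_trailingZeros_le x)

-- Below the antidiagonal `LO + TZ = n`, the point `opt n (LO x)` dominates `x`.
theorem exists_eq_opt_of_paretoOptimal {x : BitString n} (hx : paretoOptimal LOTZ x) :
    ∃ k ≤ n, x = opt n k := by
  refine ⟨_, leadingOnes_le x, eq_opt_of_leadingOnes_add_trailingZeros (le_antisymm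
    (leadingOnes_add_trailingZeros_le x) (not_lt.mp fun hlt => hx ⟨opt n (leadingOnes x), ?_⟩))⟩
  simp only [dominates, LOTZ, leadingOnes_opt (leadingOnes_le x),
    trailingZeros_opt (leadingOnes_le x), ne_eq, Prod.mk.injEq]
  omega

theorem opt_inj {j k : ℕ} (hj : j ≤ n) (hk : k ≤ n) : opt n j = opt n k ↔ j = k :=
  ⟨fun h => by rw [← leadingOnes_opt hj, h, leadingOnes_opt hk], congrArg _⟩

theorem paretoLevels_LOTZ : ParetoLevels (LOTZ (n := n)) leadingOnes where
  le := leadingOnes_le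
  apply_eq x hx := by
    obtain ⟨k, hk, rfl⟩ := exists_eq_opt_of_paretoOptimal hx
    rw [leadingOnes_opt hk, LOTZ_opt hk]
  eq_zero_iff x hx := by
    obtain ⟨k, hk, rfl⟩ := exists_eq_opt_of_paretoOptimal hx
    rw [leadingOnes_opt hk, ← opt_zero, opt_inj hk n.zero_le]
  eq_n_iff x hx := by
    obtain ⟨k, hk, rfl⟩ := exists_eq_opt_of_paretoOptimal hx
    rw [leadingOnes_opt hk, ← opt_self, opt_inj hk le_rfl]
  exists_pred x hx hpos := by
    obtain ⟨k, hk, rfl⟩ := exists_eq_opt_of_paretoOptimal hx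
    rw [leadingOnes_opt hk] at hpos ⊢
    obtain ⟨j, rfl⟩ := Nat.exists_eq_add_one.mpr hpos
    refine ⟨opt n j, ⟨⟨j, hk⟩, ?_⟩, paretoOptimal_opt (by omega),
      by rw [leadingOnes_opt (by omega)]⟩
    rw [← flipBit_opt hk, flipBit_flipBit]
  exists_succ x hx hlt := by
    obtain ⟨k, hk, rfl⟩ := exists_eq_opt_of_paretoOptimal hx
    rw [leadingOnes_opt hk] at hlt ⊢
    exact ⟨opt n (k + 1), ⟨⟨k, hlt⟩, (flipBit_opt hlt).symm⟩, paretoOptimal_opt hlt,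
      leadingOnes_opt hlt⟩

end

/-- If `c` is diversity-favouring on `{0,1}ⁿ \ {0ⁿ,1ⁿ}` for OneMinMax or
LOTZ, the population `P` is a subset of the Pareto set not covering the whole front and
`l` sorts `P` by non-increasing `c`-values, then among the first three elements of `l`
there is a good individual, and any parent selection that selects the `i`-th ranked
individual with probability `ρ i` selects a good individual with probability at least
`min {ρ 0, ρ 1, ρ 2}` (ranks 0-indexed). -/
theorem good_in_top_three {n : ℕ} {α : Type*} [LinearOrder α]
    (f : BitString n → ℤ × ℤ) (hf : f = OneMinMax ∨ f = LOTZ)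
    (c : BitString n → Finset (BitString n) → α)
    (hc : diversityFavouring f c {z | z ≠ allZeros n ∧ z ≠ allOnes n})
    (P : Finset (BitString n)) (hPne : P.Nonempty)
    (hPpar : ∀ x ∈ P, paretoOptimal f x) (hnd : mutuallyNonDominated f P)
    (hncov : ¬ coversFront f P)
    (l : List (BitString n)) (hnodup : l.Nodup) (hlP : l.toFinset = P)
    (hsort : l.Chain' fun a b => c b P ≤ c a P)
    (select : PMF (BitString n)) (ρ : ℕ → ℝ≥0∞)
    (hsel : ∀ i : Fin l.length, select (l.get i) = ρ i.val) :
    (∃ i : Fin l.length, i.val < 3 ∧ isGood f P (l.get i)) ∧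
    min (ρ 0) (min (ρ 1) (ρ 2)) ≤ select.toOuterMeasure {x | isGood f P x} := by
  have hmem {x : BitString n} : x ∈ l ↔ x ∈ P := by rw [← hlP, List.mem_toFinset]
  obtain ⟨lev, hlev⟩ : ∃ lev, ParetoLevels f lev := by
    rcases hf with rfl | rfl
    exacts [⟨_, paretoLevels_oneMinMax⟩, ⟨_, paretoLevels_LOTZ⟩]
  obtain ⟨x, hx, hgood⟩ : ∃ x ∈ l.take 3, isGood f P x := by
    refine List.exists_mem_take_three_of_pairwise hnodup ?_ (List.IsChain.pairwise hsort)
      (S := {z | z ≠ allZeros n ∧ z ≠ allOnes n}) (a := allZeros n) (b := allOnes n)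
      (fun z hz => ?_) (fun x hx => ?_) (fun x hx y hy hxS hyS hbad hgood => ?_)
    · rintro rfl
      simp [← hlP] at hPne
    · simpa [or_iff_not_imp_left] using hz
    · obtain ⟨y, hy, hgood, hyS⟩ := hlev.exists_isGood hPpar hncov (hmem.mp hx)
      exact ⟨y, hmem.mpr hy, hgood, hyS⟩
    · have hxP := hmem.mp hx
      exact hc P hnd x hxP y (hmem.mp hy) hxS hyS
        ⟨hPpar x hxP, fun h => hbad ⟨hPpar x hxP, h⟩⟩ hgood
  obtain ⟨j, hj, rfl⟩ := List.mem_take_iff_getElem.mp hx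
  have hj3 : j < 3 := by omega
  have hjl : j < l.length := by omega
  refine ⟨⟨⟨j, hjl⟩, hj3, hgood⟩, ?_⟩
  calc min (ρ 0) (min (ρ 1) (ρ 2)) ≤ ρ j := by
        interval_cases j <;> simp
    _ = select.toOuterMeasure {l[j]} := by
        rw [PMF.toOuterMeasure_apply_singleton, ← hsel ⟨j, hjl⟩, List.get_eq_getElem]
    _ ≤ select.toOuterMeasure {x | isGood f P x} :=
        MeasureTheory.measure_mono (Set.singleton_subset_iff.mpr hgood)

end EMO
end
end

section
/- Under the power-law ranking scheme over a population of size μ ≥ 3, the selection probability of the third-ranked individual satisfies r₃ = (1/3²) / (∑_{j=1}^{μ} 1/j²) ≥ 2/(3π²); consequently, whenever among the top three ranked individuals there is a good individual, the probability of selecting a good individual is at least 2/(3π²), a constant independent of μ. -/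
noncomputable section
open scoped ENNReal
attribute [local instance] Classical.propDecidable

namespace EMO


/-! Since `∑_{j ≥ 1} 1/j² = ζ(2) = π²/6`, every partial sum is at most `π²/6`, so the rank-`i`
probability `(1/i²) / ∑_{j ≤ μ} 1/j²` is at least `6/(π² i²)`, which is `≥ 2/(3π²)` for `i ≤ 3`. -/

open Real Finset

lemma sum_one_div_sq_le_pi_sq_div_six (s : Finset ℕ) :
    ∑ j ∈ s, 1 / (j : ℝ) ^ 2 ≤ π ^ 2 / 6 :=
  sum_le_hasSum s (fun _ _ => by positivity) hasSum_zeta_two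

lemma sum_Icc_one_div_sq_pos {μ : ℕ} (hμ : 1 ≤ μ) :
    0 < ∑ j ∈ Icc 1 μ, 1 / (j : ℝ) ^ 2 :=
  sum_pos (fun j hj => by have := (mem_Icc.mp hj).1; positivity)
    ⟨1, mem_Icc.mpr ⟨le_rfl, hμ⟩⟩

lemma six_div_pi_sq_mul_le_div_sum_Icc_one_div_sq {μ : ℕ} (hμ : 1 ≤ μ) {a : ℝ} (ha : 0 ≤ a) :
    6 / π ^ 2 * a ≤ a / ∑ j ∈ Icc 1 μ, 1 / (j : ℝ) ^ 2 :=
  calc 6 / π ^ 2 * a = a / (π ^ 2 / 6) := by field_simp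
    _ ≤ a / ∑ j ∈ Icc 1 μ, 1 / (j : ℝ) ^ 2 :=
      div_le_div_of_nonneg_left ha (sum_Icc_one_div_sq_pos hμ)
        (sum_one_div_sq_le_pi_sq_div_six _)

/-- Under the power-law ranking scheme (μ ≥ 3), the third-ranked
individual is selected with probability `(1/3²) / ∑_{j=1}^μ 1/j² ≥ 2/(3π²)`; hence
whenever a good individual is among the top three ranks, a good individual is selected
with probability at least `2/(3π²)`, a constant independent of μ. -/
theorem powerlaw_scheme_constant (μ : ℕ) (hμ : 3 ≤ μ) :
    ((2 / (3 * Real.pi ^ 2) : ℝ) ≤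
        (1 / (3 : ℝ) ^ 2) / ∑ j ∈ Finset.Icc 1 μ, 1 / (j : ℝ) ^ 2) ∧
    ∀ G : Finset ℕ, G ⊆ Finset.Icc 1 μ → (∃ i ∈ G, i ≤ 3) →
      (2 / (3 * Real.pi ^ 2) : ℝ) ≤
        ∑ i ∈ G, (1 / (i : ℝ) ^ 2) / ∑ j ∈ Finset.Icc 1 μ, 1 / (j : ℝ) ^ 2 := by
  have third_rank : 2 / (3 * π ^ 2) ≤ (1 / (3 : ℝ) ^ 2) / ∑ j ∈ Icc 1 μ, 1 / (j : ℝ) ^ 2 :=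
    calc 2 / (3 * π ^ 2) = 6 / π ^ 2 * (1 / (3 : ℝ) ^ 2) := by field_simp; norm_num
      _ ≤ _ := six_div_pi_sq_mul_le_div_sum_Icc_one_div_sq (by omega) (by positivity)
  refine ⟨third_rank, fun G hG ⟨i, hiG, hi3⟩ => ?_⟩
  have hi1 : (1 : ℝ) ≤ i := by exact_mod_cast (mem_Icc.mp (hG hiG)).1
  calc 2 / (3 * π ^ 2) ≤ (1 / (3 : ℝ) ^ 2) / ∑ j ∈ Icc 1 μ, 1 / (j : ℝ) ^ 2 := third_rank
    _ ≤ (1 / (i : ℝ) ^ 2) / ∑ j ∈ Icc 1 μ, 1 / (j : ℝ) ^ 2 := by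
      have hS_pos := sum_Icc_one_div_sq_pos (μ := μ) (by omega)
      gcongr
      exact_mod_cast hi3
    _ ≤ _ := single_le_sum (f := fun j : ℕ => 1 / (j : ℝ) ^ 2 / ∑ j ∈ Icc 1 μ, 1 / (j : ℝ) ^ 2)
      (fun _ _ => by positivity) hiG

end EMO
end
end
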